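/- arXiv:1102.2835 — 2 statements merged into one kernel-verified Lean document; each statement's English description precedes it below -/
import Mathlib

section
/- The multi-Dirac structure D given by the graph of an (n+1)-form Ω (D_r := {(Γ, i_Γ Ω)}) is integrable if and only if Ω is closed: dΩ = 0. Equivalently, i_{[Γ,Γ']}Ω = (-1)^{(r-1)s}£_Γ i_{Γ'}Ω − i_{Γ'} d i_Γ Ω holds for all multivector fields Γ of degree r and Γ' of degree s (with r+s ≤ n+1) if and only if dΩ = 0. -/
/-! By the Koszul identity,
`(-1)^{(r-1)s} £_Γ i_{Γ'}Ω - i_{Γ'} d i_Γ Ω = i_{[Γ,Γ']}Ω - (-1)^r i_{Γ'} i_Γ dΩ`,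
and the left side is also the form component of the multi-Courant bracket of the graph sections
`(Γ, i_Γ Ω)` and `(Γ', i_{Γ'} Ω)`. So both conditions say exactly that all double contractions
`i_{Γ'} i_Γ dΩ` vanish; already for vector fields (`r = s = 1`, admissible as `n ≥ 1`) this forces
`dΩ = 0` by nondegeneracy of contraction. -/

noncomputable section

/-- An abstract model of the calculus of multivector fields and differential
forms on a smooth manifold `Z`:  `A` plays the role of the ring of smooth
functions `C^∞(Z)`, `X` the space of (inhomogeneous) multivector fields, and
`F` the space of (inhomogeneous) differential forms.  The submodules `MV k`
and `Fm k` are the multivector fields and forms of pure degree `k`; `wedge`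
is the exterior product of multivector fields, `sch` the Schouten–Nijenhuis
bracket, `iota` the contraction (interior product) of a multivector field
with a form (for decomposable `Γ = X₁ ∧ ⋯ ∧ X_k`,
`iota Γ α = i_{X_k} ⋯ i_{X_1} α`), and `d` the exterior derivative. -/
structure MultiCalc (A X F : Type) [CommRing A] [Algebra ℝ A]
    [AddCommGroup X] [AddCommGroup F] [Module ℝ X] [Module ℝ F]
    [Module A X] [Module A F] [IsScalarTower ℝ A X] [IsScalarTower ℝ A F] where
  MV : ℕ → Submodule A X
  Fm : ℕ → Submodule A F
  wedge : X → X → X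
  sch : X → X → X
  iota : X → F → F
  d : F → F
  wedge_add_left : ∀ a b c, wedge (a + b) c = wedge a c + wedge b c
  wedge_add_right : ∀ a b c, wedge a (b + c) = wedge a b + wedge a c
  wedge_smul_left : ∀ (f : A) a b, wedge (f • a) b = f • wedge a b
  wedge_smul_right : ∀ (f : A) a b, wedge a (f • b) = f • wedge a b
  iota_add_left : ∀ a b α, iota (a + b) α = iota a α + iota b α
  iota_add_right : ∀ a α β, iota a (α + β) = iota a α + iota a β
  iota_smul_left : ∀ (f : A) a α, iota (f • a) α = f • iota a α
  iota_smul_right : ∀ (f : A) a α, iota a (f • α) = f • iota a α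
  sch_add_left : ∀ a b c, sch (a + b) c = sch a c + sch b c
  sch_add_right : ∀ a b c, sch a (b + c) = sch a b + sch a c
  sch_smul_left : ∀ (c : ℝ) a b, sch (c • a) b = c • sch a b
  sch_smul_right : ∀ (c : ℝ) a b, sch a (c • b) = c • sch a b
  d_add : ∀ α β, d (α + β) = d α + d β
  d_smul : ∀ (c : ℝ) α, d (c • α) = c • d α
  d_d : ∀ α, d (d α) = 0
  wedge_mem : ∀ {r s : ℕ} {a b}, a ∈ MV r → b ∈ MV s → wedge a b ∈ MV (r + s)
  sch_mem : ∀ {r s : ℕ} {a b}, a ∈ MV r → b ∈ MV s → sch a b ∈ MV (r + s - 1)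
  iota_mem : ∀ {r k : ℕ} {a α}, a ∈ MV r → α ∈ Fm k → iota a α ∈ Fm (k - r)
  iota_zero_of_lt : ∀ {r k : ℕ} {a α}, a ∈ MV r → α ∈ Fm k → k < r → iota a α = 0
  d_mem : ∀ {k : ℕ} {α}, α ∈ Fm k → d α ∈ Fm (k + 1)
  /-- `i_{Γ ∧ Γ'} = i_{Γ'} ∘ i_Γ` -/
  iota_wedge : ∀ {r s : ℕ} {a b}, a ∈ MV r → b ∈ MV s →
    ∀ α, iota (wedge a b) α = iota b (iota a α)
  /-- graded commutativity of contractions -/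
  iota_comm : ∀ {r s : ℕ} {a b}, a ∈ MV r → b ∈ MV s →
    ∀ α, iota a (iota b α) = ((-1:ℝ)^(r*s)) • iota b (iota a α)
  /-- the Koszul identity `i_{[Γ,Γ']} α = (-1)^{(k-1)l} £_Γ i_{Γ'} α − i_{Γ'} £_Γ α`,
  written out using `£_Γ α = d i_Γ α − (-1)^k i_Γ dα`. -/
  koszul : ∀ {k l : ℕ} {a b}, a ∈ MV k → b ∈ MV l → ∀ α,
    iota (sch a b) α =
      ((-1:ℝ)^((k-1)*l)) •
        (d (iota a (iota b α)) - ((-1:ℝ)^k) • iota a (d (iota b α)))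
      - iota b (d (iota a α) - ((-1:ℝ)^k) • iota a (d α))
  /-- graded anticommutativity of the Schouten–Nijenhuis bracket -/
  sch_comm : ∀ {k l : ℕ} {a b}, a ∈ MV k → b ∈ MV l →
    sch a b = -(((-1:ℝ)^((k-1)*(l-1))) • sch b a)
  /-- graded Leibniz rule for the Schouten–Nijenhuis bracket -/
  sch_leibniz : ∀ {k l m : ℕ} {a b c}, a ∈ MV k → b ∈ MV l → c ∈ MV m →
    sch a (wedge b c) = wedge (sch a b) c + ((-1:ℝ)^((k-1)*l)) • wedge b (sch a c)
  /-- graded Jacobi identity for the Schouten–Nijenhuis bracket -/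
  sch_jacobi : ∀ {k l m : ℕ} {a b c}, a ∈ MV k → b ∈ MV l → c ∈ MV m →
    ((-1:ℝ)^((k-1)*(m-1))) • sch a (sch b c)
      + ((-1:ℝ)^((l-1)*(k-1))) • sch b (sch c a)
      + ((-1:ℝ)^((m-1)*(l-1))) • sch c (sch a b) = 0
  /-- contraction is a nondegenerate pairing of multivector fields with forms -/
  iota_nondeg : ∀ {k r : ℕ} {α}, α ∈ Fm k → 1 ≤ r → r ≤ k →
    (∀ a ∈ MV r, iota a α = 0) → α = 0

namespace MultiCalc

variable {A X F : Type} [CommRing A] [Algebra ℝ A]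
  [AddCommGroup X] [AddCommGroup F] [Module ℝ X] [Module ℝ F]
  [Module A X] [Module A F] [IsScalarTower ℝ A X] [IsScalarTower ℝ A F]
variable (C : MultiCalc A X F)

/-- generalized Lie derivative along a multivector field of degree `k`:
`£_Γ α = d i_Γ α − (-1)^k i_Γ dα` -/
def lie (k : ℕ) (a : X) (α : F) : F :=
  C.d (C.iota a α) - ((-1:ℝ)^k) • C.iota a (C.d α)

/-- graded symmetric pairing `⟨⟨·,·⟩⟩₊` on `L_r × L_s` -/
def pairPlus (r s : ℕ) (p q : X × F) : F :=
  (1/2 : ℝ) • (C.iota q.1 p.2 + ((-1:ℝ)^(r*s)) • C.iota p.1 q.2)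

/-- graded antisymmetric pairing `⟨⟨·,·⟩⟩₋` on `L_r × L_s` -/
def pairMinus (r s : ℕ) (p q : X × F) : F :=
  (1/2 : ℝ) • (C.iota q.1 p.2 - ((-1:ℝ)^(r*s)) • C.iota p.1 q.2)

/-- the multi-Courant bracket on sections of `L_r × L_s` -/
def courant (r s : ℕ) (p q : X × F) : X × F :=
  (C.sch p.1 q.1,
    ((-1:ℝ)^((r-1)*s)) • C.lie r p.1 q.2 + ((-1:ℝ)^s) • C.lie s q.1 p.2
      - ((-1:ℝ)^s) • C.d (C.pairPlus r s p q))

/-- the graded wedge product of sections of `L_r × L_s` -/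
def wedgeP (r s : ℕ) (p q : X × F) : X × F :=
  (C.wedge p.1 q.1, C.pairPlus r s p q)

/-- `L_r = ⋀^r(TZ) ×_Z ⋀^{n+1-r}(T^*Z)` -/
def Lset (n r : ℕ) : Set (X × F) := {p | p.1 ∈ C.MV r ∧ p.2 ∈ C.Fm (n + 1 - r)}

/-- the `s`-orthogonal complement of `V ⊆ L_r` with respect to `⟨⟨·,·⟩⟩₋` -/
def orthC (n r : ℕ) (V : Set (X × F)) (s : ℕ) : Set (X × F) :=
  {q ∈ C.Lset n s | ∀ p ∈ V, C.pairMinus r s p q = 0}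

/-- a multi-Dirac structure of degree `n`: subbundles `D r ⊆ L_r` that are
maximally isotropic, i.e. `(D r)^{⊥,s} = D s` whenever `r + s ≤ n + 1` -/
structure IsMultiDirac (n : ℕ) (D : ℕ → Set (X × F)) : Prop where
  subset : ∀ r, 1 ≤ r → r ≤ n → D r ⊆ C.Lset n r
  orth : ∀ r s, 1 ≤ r → 1 ≤ s → r + s ≤ n + 1 → C.orthC n r (D r) s = D s

/-- integrability: sections of `D` are closed under the multi-Courant bracket -/
def Integrable (n : ℕ) (D : ℕ → Set (X × F)) : Prop :=
  ∀ r s, 1 ≤ r → 1 ≤ s → r + s ≤ n + 1 →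
    ∀ p ∈ D r, ∀ q ∈ D s, C.courant r s p q ∈ D (r + s - 1)

/-- the integrability tensor `T_D = 2 ⟨⟨·, [[·,·]]⟩⟩₋` -/
def TD (r s t : ℕ) (p q w : X × F) : F :=
  (2:ℝ) • C.pairMinus r (s + t - 1) p (C.courant s t q w)

/-- the Jacobiator of the multi-Courant bracket -/
def jacobiator (r s t : ℕ) (p q w : X × F) : X × F :=
  C.courant r (s + t - 1) p (C.courant s t q w)
    + ((-1:ℝ)^((t-1)*(r+s))) • C.courant t (r + s - 1) w (C.courant r s p q)
    + ((-1:ℝ)^((r-1)*(s+t))) • C.courant s (t + r - 1) q (C.courant t r w p)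

/-- the gauge transformation `Φ_σ (Γ, Σ) = (Γ, Σ + i_Γ σ)` -/
def gauge (σ : F) (p : X × F) : X × F := (p.1, p.2 + C.iota p.1 σ)

/-- the graph `{(Γ, i_Γ Ω)}` of a differential form `Ω` -/
def graphD (Ω : F) (r : ℕ) : Set (X × F) := {p | p.1 ∈ C.MV r ∧ p.2 = C.iota p.1 Ω}

/-- the multi-Poisson bracket `{Σ, Σ'} = −(-1)^{|Σ|} i_{Γ_{Σ'}} dΣ`, written as a
function of the degree `k = |Σ|`, the form `Σ`, and a multivector field
`Γ_{Σ'}` associated with `Σ'` -/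
def pb (k : ℕ) (α : F) (g : X) : F := -(((-1:ℝ)^k) • C.iota g (C.d α))

/-- an `(n-r)`-form `Σ` is admissible if `(Γ_Σ, dΣ) ∈ D_r` for some
`r`-multivector field `Γ_Σ` -/
def Admissible (n : ℕ) (D : ℕ → Set (X × F)) (r : ℕ) (α : F) : Prop :=
  α ∈ C.Fm (n - r) ∧ ∃ g ∈ C.MV r, (g, C.d α) ∈ D r

/-- the form `Ω_D(v_1, …, v_n) := α_n(v_1, …, v_{n-1})` associated with `D_1`,
for sections `(v_i, α_i)` of `D_1` and `n = m + 1` -/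
def OmD (m : ℕ) (p : Fin (m+1) → X × F) : F :=
  (List.ofFn fun i : Fin m => (p i.castSucc).1).foldl
    (fun β v => C.iota v β) (p (Fin.last m)).2

end MultiCalc

namespace MultiCalc

lemma neg_one_pow_smul_neg_one_pow_smul {M : Type*} [AddCommGroup M] [Module ℝ M]
    (m : ℕ) (x : M) : ((-1:ℝ)^m) • ((-1:ℝ)^m) • x = x := by
  rw [smul_smul, ← pow_add, Even.neg_one_pow ⟨m, rfl⟩, one_smul]

variable {A X F : Type} [CommRing A] [Algebra ℝ A]
  [AddCommGroup X] [AddCommGroup F] [Module ℝ X] [Module ℝ F]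
  [Module A X] [Module A F] [IsScalarTower ℝ A X] [IsScalarTower ℝ A F]
variable (C : MultiCalc A X F)

def iotaAddHom (a : X) : F →+ F := AddMonoidHom.mk' (C.iota a) (C.iota_add_right a)

lemma iota_zero_right (a : X) : C.iota a 0 = 0 := (C.iotaAddHom a).map_zero

lemma iota_sub_right (a : X) (α β : F) : C.iota a (α - β) = C.iota a α - C.iota a β :=
  (C.iotaAddHom a).map_sub α β

lemma iota_smul_real (c : ℝ) (a : X) (α : F) : C.iota a (c • α) = c • C.iota a α := by
  rw [← algebraMap_smul A c α, C.iota_smul_right, algebraMap_smul]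

variable {C}

lemma pairPlus_graph {r s : ℕ} {g g' : X} (hg : g ∈ C.MV r) (hg' : g' ∈ C.MV s) (Ω : F) :
    C.pairPlus r s (g, C.iota g Ω) (g', C.iota g' Ω) = C.iota g' (C.iota g Ω) := by
  rw [pairPlus, C.iota_comm hg hg' Ω, neg_one_pow_smul_neg_one_pow_smul, ← two_smul ℝ,
    smul_smul]
  norm_num

lemma courant_graph_snd {r s : ℕ} {g g' : X} (hg : g ∈ C.MV r) (hg' : g' ∈ C.MV s) (Ω : F) :
    (C.courant r s (g, C.iota g Ω) (g', C.iota g' Ω)).2 =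
      ((-1:ℝ)^((r-1)*s)) • C.lie r g (C.iota g' Ω) - C.iota g' (C.d (C.iota g Ω)) := by
  simp only [courant]
  rw [pairPlus_graph hg hg', lie.eq_1 C s g', smul_sub, neg_one_pow_smul_neg_one_pow_smul]
  abel

lemma lie_sub_iota_d_iota_eq {r s : ℕ} {g g' : X} (hg : g ∈ C.MV r) (hg' : g' ∈ C.MV s)
    (Ω : F) :
    ((-1:ℝ)^((r-1)*s)) • C.lie r g (C.iota g' Ω) - C.iota g' (C.d (C.iota g Ω)) =
      C.iota (C.sch g g') Ω - ((-1:ℝ)^r) • C.iota g' (C.iota g (C.d Ω)) := by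
  rw [C.koszul hg hg' Ω, C.iota_sub_right, C.iota_smul_real, lie]
  abel

lemma iota_sch_eq_lie_sub_iff {r s : ℕ} {g g' : X} (hg : g ∈ C.MV r) (hg' : g' ∈ C.MV s)
    (Ω : F) :
    C.iota (C.sch g g') Ω =
        ((-1:ℝ)^((r-1)*s)) • C.lie r g (C.iota g' Ω) - C.iota g' (C.d (C.iota g Ω)) ↔
      C.iota g' (C.iota g (C.d Ω)) = 0 := by
  rw [lie_sub_iota_d_iota_eq hg hg', eq_comm, sub_eq_self,
    smul_eq_zero_iff_right (pow_ne_zero r (by norm_num))]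

lemma courant_graph_mem_graphD_iff {r s : ℕ} {g g' : X} (hg : g ∈ C.MV r)
    (hg' : g' ∈ C.MV s) (Ω : F) :
    C.courant r s (g, C.iota g Ω) (g', C.iota g' Ω) ∈ C.graphD Ω (r + s - 1) ↔
      C.iota g' (C.iota g (C.d Ω)) = 0 := by
  rw [← iota_sch_eq_lie_sub_iff hg hg', ← courant_graph_snd hg hg', eq_comm]
  exact and_iff_right (C.sch_mem hg hg')

lemma eq_zero_of_forall_iota_iota_eq_zero {k : ℕ} {α : F} (hα : α ∈ C.Fm (k + 2))
    (h : ∀ g ∈ C.MV 1, ∀ g' ∈ C.MV 1, C.iota g' (C.iota g α) = 0) : α = 0 := by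
  refine C.iota_nondeg hα le_rfl (by omega) fun g hg => ?_
  have hgα : C.iota g α ∈ C.Fm (k + 1) := C.iota_mem hg hα
  exact C.iota_nondeg hgα le_rfl (by omega) (h g hg)

end MultiCalc

/-- The multi-Dirac structure given by the graph of an `(n+1)`-form `Ω` is
integrable if and only if `dΩ = 0`; equivalently, the identity
`i_{[Γ,Γ']}Ω = (-1)^{(r-1)s} £_Γ i_{Γ'}Ω − i_{Γ'} d i_Γ Ω` holds for all
multivector fields `Γ`, `Γ'` if and only if `dΩ = 0`. -/
theorem graph_integrable_iff_closed {A X F : Type} [CommRing A] [Algebra ℝ A]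
    [AddCommGroup X] [AddCommGroup F] [Module ℝ X] [Module ℝ F]
    [Module A X] [Module A F] [IsScalarTower ℝ A X] [IsScalarTower ℝ A F]
    (C : MultiCalc A X F)
    (n : ℕ) (hn : 1 ≤ n) (Ω : F) (hΩ : Ω ∈ C.Fm (n + 1)) :
    (C.Integrable n (C.graphD Ω) ↔ C.d Ω = 0) ∧
      ((∀ (r s : ℕ) (g g' : X), 1 ≤ r → 1 ≤ s → r + s ≤ n + 1 →
          g ∈ C.MV r → g' ∈ C.MV s →
          C.iota (C.sch g g') Ω =
            ((-1:ℝ)^((r-1)*s)) • C.lie r g (C.iota g' Ω)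
              - C.iota g' (C.d (C.iota g Ω))) ↔ C.d Ω = 0) := by
  have hdΩ : C.d Ω ∈ C.Fm (n + 1 + 1) := C.d_mem hΩ
  have closed_of :
      (∀ g ∈ C.MV 1, ∀ g' ∈ C.MV 1, C.iota g' (C.iota g (C.d Ω)) = 0) → C.d Ω = 0 :=
    C.eq_zero_of_forall_iota_iota_eq_zero hdΩ
  have iota_iota_d_eq_zero (hd : C.d Ω = 0) (g g' : X) : C.iota g' (C.iota g (C.d Ω)) = 0 := by
    rw [hd, C.iota_zero_right, C.iota_zero_right]
  refine ⟨⟨fun hint => closed_of fun g hg g' hg' => ?_, fun hd r s _ _ _ => ?_⟩,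
    ⟨fun hall => closed_of fun g hg g' hg' => ?_, fun hd r s g g' _ _ _ hg hg' => ?_⟩⟩
  · exact (MultiCalc.courant_graph_mem_graphD_iff hg hg' Ω).1
      (hint 1 1 le_rfl le_rfl (by omega) _ ⟨hg, rfl⟩ _ ⟨hg', rfl⟩)
  · rintro ⟨g, σ⟩ ⟨hg, hσ : σ = C.iota g Ω⟩ ⟨g', σ'⟩ ⟨hg', hσ' : σ' = C.iota g' Ω⟩
    subst hσ hσ'
    exact (MultiCalc.courant_graph_mem_graphD_iff hg hg' Ω).2 (iota_iota_d_eq_zero hd g g')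
  · exact (MultiCalc.iota_sch_eq_lie_sub_iff hg hg' Ω).1
      (hall 1 1 g g' le_rfl le_rfl (by omega) hg hg')
  · exact (MultiCalc.iota_sch_eq_lie_sub_iff hg hg' Ω).2 (iota_iota_d_eq_zero hd g g')
end
end

section
/- For an integrable multi-Dirac structure D, the multi-Poisson bracket {Σ,Σ'} := −(-1)^{|Σ|} i_{Γ_{Σ'}} dΣ of admissible forms is well-defined: it is independent of the choice of multivector field Γ_{Σ'} with (Γ_{Σ'}, dΣ') ∈ D. -/
noncomputable section

/-! Maximal isotropy puts `(Γ_Σ, dΣ)` in the orthogonal complement of `D_s`. Pairing it with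
`(Γ_{Σ'}, dΣ') ∈ D_s` gives `i_{Γ_{Σ'}} dΣ = ± i_{Γ_Σ} dΣ'`, whose right side does not involve
`Γ_{Σ'}`. -/

namespace MultiCalc

variable {A X F : Type} [CommRing A] [Algebra ℝ A]
  [AddCommGroup X] [AddCommGroup F] [Module ℝ X] [Module ℝ F]
  [Module A X] [Module A F] [IsScalarTower ℝ A X] [IsScalarTower ℝ A F]
variable (C : MultiCalc A X F)

theorem pairMinus_eq_zero_iff (r s : ℕ) (p q : X × F) :
    C.pairMinus r s p q = 0 ↔ C.iota q.1 p.2 = ((-1:ℝ)^(r*s)) • C.iota p.1 q.2 := by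
  rw [pairMinus, smul_eq_zero, sub_eq_zero]
  norm_num

variable {C}

theorem iota_eq_of_mem_orthC {n r s : ℕ} {V : Set (X × F)} {q : X × F}
    (hq : q ∈ C.orthC n s V r) {g₁ g₂ : X} {σ : F} (h₁ : (g₁, σ) ∈ V) (h₂ : (g₂, σ) ∈ V) :
    C.iota g₁ q.2 = C.iota g₂ q.2 := by
  have e₁ := (C.pairMinus_eq_zero_iff s r _ q).mp (hq.2 _ h₁)
  have e₂ := (C.pairMinus_eq_zero_iff s r _ q).mp (hq.2 _ h₂)
  exact ((isUnit_neg_one.pow (s * r)).smul_left_cancel).mp (e₁.symm.trans e₂)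

end MultiCalc

theorem pb_well_defined_general {A X F : Type} [CommRing A] [Algebra ℝ A]
    [AddCommGroup X] [AddCommGroup F] [Module ℝ X] [Module ℝ F]
    [Module A X] [Module A F] [IsScalarTower ℝ A X] [IsScalarTower ℝ A F]
    (C : MultiCalc A X F)
    (n : ℕ) (D : ℕ → Set (X × F)) (hD : C.IsMultiDirac n D)
    (r s : ℕ) (hr : 1 ≤ r) (hs : 1 ≤ s) (hrs : r + s ≤ n + 1)
    (α : F) (g : X)
    (hgD : (g, C.d α) ∈ D r)
    (β : F) (g1 g2 : X)
    (h1 : (g1, C.d β) ∈ D s) (h2 : (g2, C.d β) ∈ D s) :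
    C.pb (r - 1) α g1 = C.pb (r - 1) α g2 := by
  rw [← hD.orth s r hs hr (by omega)] at hgD
  simp only [MultiCalc.pb, MultiCalc.iota_eq_of_mem_orthC hgD h1 h2]

/-- The multi-Poisson bracket `{Σ,Σ'} = −(-1)^{|Σ|} i_{Γ_{Σ'}} dΣ` of
admissible forms is well defined: it does not depend on the choice of
multivector field `Γ_{Σ'}` with `(Γ_{Σ'}, dΣ') ∈ D`. -/
theorem pb_well_defined {A X F : Type} [CommRing A] [Algebra ℝ A]
    [AddCommGroup X] [AddCommGroup F] [Module ℝ X] [Module ℝ F]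
    [Module A X] [Module A F] [IsScalarTower ℝ A X] [IsScalarTower ℝ A F]
    (C : MultiCalc A X F)
    (n : ℕ) (D : ℕ → Set (X × F)) (hD : C.IsMultiDirac n D)
    (hInt : C.Integrable n D)
    (r s : ℕ) (hr : 1 ≤ r) (hs : 1 ≤ s) (hrs : r + s ≤ n + 1)
    (α : F) (hα : α ∈ C.Fm (n - r)) (g : X) (hg : g ∈ C.MV r)
    (hgD : (g, C.d α) ∈ D r)
    (β : F) (hβ : β ∈ C.Fm (n - s)) (g1 g2 : X)
    (hg1 : g1 ∈ C.MV s) (hg2 : g2 ∈ C.MV s)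
    (h1 : (g1, C.d β) ∈ D s) (h2 : (g2, C.d β) ∈ D s) :
    C.pb (r - 1) α g1 = C.pb (r - 1) α g2 :=
  pb_well_defined_general C n D hD r s hr hs hrs α g hgD β g1 g2 h1 h2
end
end
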